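/- Let (V,c,p) be an instance of Asymmetric A Priori TSP with p(V) := Σ_{v∈V} p(v) ≤ 1/2. Then every tour T on V satisfies E_{A∼p}[c(T[A])] ≤ 2 · E_{A∼p}[TSP(A,c)]. -/

import Mathlib

noncomputable section

/-- The cost of a tour given as a cyclic list: the sum of `c` over consecutive pairs
(cyclically). -/
def cycCost {V : Type*} (c : V → V → ℝ) (l : List V) : ℝ :=
  (List.zipWith c l (l.rotate 1)).sum

/-- `l` is a tour on the finite set `A`: a cyclic ordering of `A`, visiting each element
exactly once. -/
def IsTour {V : Type*} [DecidableEq V] (A : Finset V) (l : List V) : Prop :=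
  l.Nodup ∧ l.toFinset = A

/-- Short-cutting a tour to the set `A` of active vertices. -/
def shortcut {V : Type*} [DecidableEq V] (l : List V) (A : Finset V) : List V :=
  l.filter (fun v => v ∈ A)

/-- The expectation of `f` over the random set of active vertices, where each vertex `v`
is active independently with probability `p v`. -/
def apExpect {V : Type*} [Fintype V] [DecidableEq V] (p : V → ℝ) (f : Finset V → ℝ) : ℝ :=
  ∑ A : Finset V, (∏ v ∈ A, p v) * (∏ v ∈ Aᶜ, (1 - p v)) * f A

/-- The minimum cost of a tour on `A` with respect to `c`. -/
def TSP {V : Type*} [DecidableEq V] (c : V → V → ℝ) (A : Finset V) : ℝ :=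
  sInf {x : ℝ | ∃ l : List V, IsTour A l ∧ x = cycCost c l}


/-!
Every edge of the short-cut tour `T[A]` joins two distinct active vertices, so
`E[c(T[A])] ≤ ∑_{u ≠ v} p u * p v * c u v`. Conversely, since `∏_{w ≠ u, v} (1 - p w) ≥ 1 - p(V) ≥ 1/2`,
the event `A = {u, v}` has probability at least `p u * p v / 2`, and on it the optimal tour costs
`c u v + c v u`. Symmetrising the sum over ordered pairs and grouping it by unordered pairs gives
`∑_{u ≠ v} p u * p v * c u v ≤ 2 * E[TSP(A)]`.
-/

open Finset

section Tours

variable {V : Type*} (c : V → V → ℝ)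

lemma cycCost_eq_sum_zip (l : List V) :
    cycCost c l = ((l.zip (l.rotate 1)).map fun x => c x.1 x.2).sum := by
  rw [cycCost, List.map_zip_eq_zipWith]
  rfl

lemma cycCost_nonneg (hc0 : ∀ x y, 0 ≤ c x y) (l : List V) : 0 ≤ cycCost c l := by
  rw [cycCost_eq_sum_zip]
  exact List.sum_nonneg fun _ hx => by
    obtain ⟨x, -, rfl⟩ := List.mem_map.1 hx
    exact hc0 _ _

lemma cycCost_pair (u v : V) : cycCost c [u, v] = c u v + c v u := by
  simp [cycCost, List.rotate]

variable [DecidableEq V]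

lemma cycCost_le_sum_product (hc0 : ∀ x y, 0 ≤ c x y) {l : List V} (hl : l.Nodup)
    {A : Finset V} (hlA : ∀ v ∈ l, v ∈ A) :
    cycCost c l ≤ ∑ x ∈ A ×ˢ A, c x.1 x.2 := by
  -- the edges of `l` are pairwise distinct because their tails are
  have hzip : (l.zip (l.rotate 1)).Nodup :=
    List.Nodup.of_map Prod.fst <| by rwa [List.map_fst_zip (by simp)]
  rw [cycCost_eq_sum_zip, ← List.sum_toFinset _ hzip]
  refine sum_le_sum_of_subset_of_nonneg (fun x hx => ?_) fun x _ _ => hc0 x.1 x.2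
  obtain ⟨h₁, h₂⟩ := List.of_mem_zip (List.mem_toFinset.1 hx)
  exact mem_product.2 ⟨hlA _ h₁, hlA _ (List.mem_rotate.1 h₂)⟩

lemma TSP_nonneg (hc0 : ∀ x y, 0 ≤ c x y) (A : Finset V) : 0 ≤ TSP c A :=
  Real.sInf_nonneg <| by
    rintro x ⟨l, -, rfl⟩
    exact cycCost_nonneg c hc0 l

lemma add_le_TSP_pair {u v : V} (huv : u ≠ v) : c u v + c v u ≤ TSP c {u, v} := by
  have huv' : [u, v].Nodup := by simpa using huv
  refine le_csInf ⟨_, [u, v], ⟨huv', by simp⟩, rfl⟩ ?_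
  rintro x ⟨l, hl, rfl⟩
  rcases List.perm_pair.1 (List.perm_of_nodup_nodup_toFinset_eq hl.1 huv' (by simpa using hl.2))
    with rfl | rfl
  · exact (cycCost_pair c u v).ge
  · exact (cycCost_pair c v u).ge.trans' (add_comm _ _).le

end Tours

lemma one_sub_sum_le_prod_one_sub {ι : Type*} (f : ι → ℝ) (hf0 : ∀ i, 0 ≤ f i)
    (hf1 : ∀ i, f i ≤ 1) (s : Finset ι) :
    1 - ∑ i ∈ s, f i ≤ ∏ i ∈ s, (1 - f i) := by
  classical
  induction s using Finset.induction with
  | empty => simp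
  | @insert a s ha ih =>
    rw [sum_insert ha, prod_insert ha]
    have h₁ : 0 ≤ ∏ i ∈ s, (1 - f i) := prod_nonneg fun i _ => sub_nonneg.2 (hf1 i)
    have h₂ : 0 ≤ ∑ i ∈ s, f i := sum_nonneg fun i _ => hf0 i
    nlinarith [hf0 a, hf1 a]

section Expectation

variable {V : Type*} [Fintype V] [DecidableEq V] (c : V → V → ℝ) (p : V → ℝ)

lemma sum_pair_le_two_mul_sum (g : Finset V → ℝ) (hg : ∀ A, 0 ≤ g A) :
    ∑ x : V × V, g {x.1, x.2} ≤ 2 * ∑ A, g A := by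
  have hfiber : ∀ B ∈ univ.image (fun x : V × V => ({x.1, x.2} : Finset V)),
      #{x ∈ (univ : Finset (V × V)) | {x.1, x.2} = B} ≤ 2 := by
    simp only [mem_image, mem_univ, true_and]
    rintro _ ⟨⟨a, b⟩, rfl⟩
    refine (card_le_card fun x hx => ?_).trans (card_le_two (a := (a, b)) (b := (b, a)))
    rw [mem_filter, ← coe_inj, coe_pair, coe_pair, Set.pair_eq_pair_iff] at hx
    simp only [mem_insert, mem_singleton, Prod.ext_iff]
    exact hx.2
  calc ∑ x : V × V, g {x.1, x.2}
      = ∑ B ∈ univ.image (fun x : V × V => ({x.1, x.2} : Finset V)),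
          #{x ∈ (univ : Finset (V × V)) | {x.1, x.2} = B} • g B := sum_comp g _
    _ ≤ ∑ B ∈ univ.image (fun x : V × V => ({x.1, x.2} : Finset V)), 2 * g B :=
        sum_le_sum fun B hB => by
          rw [nsmul_eq_mul]
          exact mul_le_mul_of_nonneg_right (by exact_mod_cast hfiber B hB) (hg B)
    _ ≤ ∑ B, 2 * g B :=
        sum_le_sum_of_subset_of_nonneg (subset_univ _) fun B _ _ => mul_nonneg two_pos.le (hg B)
    _ = 2 * ∑ A, g A := (mul_sum _ _ _).symm

def apProb (A : Finset V) : ℝ := (∏ v ∈ A, p v) * ∏ v ∈ Aᶜ, (1 - p v)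

lemma apExpect_eq_sum_apProb (f : Finset V → ℝ) : apExpect p f = ∑ A, apProb p A * f A := rfl

lemma apProb_nonneg (hp0 : ∀ v, 0 ≤ p v) (hp1 : ∀ v, p v ≤ 1) (A : Finset V) :
    0 ≤ apProb p A :=
  mul_nonneg (prod_nonneg fun v _ => hp0 v) (prod_nonneg fun v _ => sub_nonneg.2 (hp1 v))

lemma apExpect_mono (hp0 : ∀ v, 0 ≤ p v) (hp1 : ∀ v, p v ≤ 1) {f g : Finset V → ℝ}
    (hfg : ∀ A, f A ≤ g A) : apExpect p f ≤ apExpect p g :=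
  sum_le_sum fun A _ => mul_le_mul_of_nonneg_left (hfg A) (apProb_nonneg p hp0 hp1 A)

lemma apExpect_sum {ι : Type*} (s : Finset ι) (f : ι → Finset V → ℝ) :
    apExpect p (fun A => ∑ i ∈ s, f i A) = ∑ i ∈ s, apExpect p (f i) := by
  simp only [apExpect_eq_sum_apProb, mul_sum]
  exact sum_comm

lemma sum_apProb_of_subset (S : Finset V) : ∑ A with S ⊆ A, apProb p A = ∏ v ∈ S, p v := by
  -- expand `∏ v, (p v + q v)` over subsets, where `q = 0` on `S` and `q = 1 - p` off `S`
  have hexpand := prod_add p (fun v => if v ∈ S then 0 else 1 - p v) univ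
  have hprod : ∏ v, (p v + if v ∈ S then 0 else 1 - p v) = ∏ v ∈ S, p v := by
    calc ∏ v, (p v + if v ∈ S then 0 else 1 - p v) = ∏ v, if v ∈ S then p v else 1 :=
          prod_congr rfl fun v _ => by split_ifs <;> ring
      _ = ∏ v ∈ S, p v := by rw [prod_ite_mem, univ_inter]
  rw [← hprod, hexpand, powerset_univ, sum_filter]
  refine sum_congr rfl fun A _ => ?_
  rw [apProb, ← compl_eq_univ_sdiff]
  split_ifs with hSA
  · congr 1
    exact prod_congr rfl fun v hv => (if_neg fun hvS => mem_compl.1 hv (hSA hvS)).symm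
  · obtain ⟨v, hvS, hvA⟩ := not_subset.1 hSA
    rw [prod_eq_zero (f := fun v => if v ∈ S then (0 : ℝ) else 1 - p v) (mem_compl.2 hvA)
      (if_pos hvS), mul_zero]

lemma apExpect_ite_subset (S : Finset V) (a : ℝ) :
    apExpect p (fun A => if S ⊆ A then a else 0) = (∏ v ∈ S, p v) * a := by
  simp only [apExpect_eq_sum_apProb, mul_ite, mul_zero]
  rw [← sum_filter, ← sum_mul, sum_apProb_of_subset]

lemma prod_le_two_mul_apProb (hp0 : ∀ v, 0 ≤ p v) (hp1 : ∀ v, p v ≤ 1)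
    (hpV : ∑ v, p v ≤ 1 / 2) (S : Finset V) : ∏ v ∈ S, p v ≤ 2 * apProb p S := by
  have hcompl : 1 / 2 ≤ ∏ v ∈ Sᶜ, (1 - p v) := by
    have := one_sub_sum_le_prod_one_sub p hp0 hp1 Sᶜ
    have := sum_le_sum_of_subset_of_nonneg (subset_univ Sᶜ) fun v _ _ => hp0 v
    linarith
  have := prod_nonneg fun v (_ : v ∈ S) => hp0 v
  rw [apProb]
  nlinarith

lemma apExpect_sum_product_self :
    apExpect p (fun A => ∑ x ∈ A ×ˢ A, c x.1 x.2) =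
      ∑ x : V × V, (∏ v ∈ {x.1, x.2}, p v) * c x.1 x.2 := by
  have hind : ∀ A : Finset V, ∑ x ∈ A ×ˢ A, c x.1 x.2 =
      ∑ x : V × V, if {x.1, x.2} ⊆ A then c x.1 x.2 else 0 := fun A => by
    rw [← sum_filter]
    congr 1
    ext x
    simp [insert_subset_iff]
  simp only [hind, apExpect_sum, apExpect_ite_subset]

lemma prod_pair_mul_add_le (hc0 : ∀ x y, 0 ≤ c x y) (hcrefl : ∀ v, c v v = 0)
    (hp0 : ∀ v, 0 ≤ p v) (hp1 : ∀ v, p v ≤ 1) (hpV : ∑ v, p v ≤ 1 / 2) (u v : V) :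
    (∏ w ∈ {u, v}, p w) * (c u v + c v u) ≤ 2 * (apProb p {u, v} * TSP c {u, v}) := by
  have hRHS : 0 ≤ apProb p {u, v} * TSP c {u, v} :=
    mul_nonneg (apProb_nonneg p hp0 hp1 _) (TSP_nonneg c hc0 _)
  obtain rfl | huv := eq_or_ne u v
  · simpa [hcrefl] using hRHS
  rw [← mul_assoc]
  exact mul_le_mul (prod_le_two_mul_apProb p hp0 hp1 hpV _) (add_le_TSP_pair c huv)
    (add_nonneg (hc0 u v) (hc0 v u)) (mul_nonneg two_pos.le (apProb_nonneg p hp0 hp1 _))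

lemma sum_prod_pair_mul_le_two_mul_apExpect_TSP (hc0 : ∀ x y, 0 ≤ c x y)
    (hcrefl : ∀ v, c v v = 0) (hp0 : ∀ v, 0 ≤ p v) (hp1 : ∀ v, p v ≤ 1)
    (hpV : ∑ v, p v ≤ 1 / 2) :
    ∑ x : V × V, (∏ v ∈ {x.1, x.2}, p v) * c x.1 x.2 ≤ 2 * apExpect p (fun A => TSP c A) := by
  have hswap : ∑ x : V × V, (∏ v ∈ {x.1, x.2}, p v) * c x.1 x.2 =
      ∑ x : V × V, (∏ v ∈ {x.1, x.2}, p v) * c x.2 x.1 :=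
    Fintype.sum_equiv (Equiv.prodComm V V) _ _ fun x => by simp [pair_comm]
  have hsymm : 2 * ∑ x : V × V, (∏ v ∈ {x.1, x.2}, p v) * c x.1 x.2 ≤
      2 * ∑ x : V × V, apProb p {x.1, x.2} * TSP c {x.1, x.2} := by
    rw [two_mul]
    nth_rw 2 [hswap]
    rw [← sum_add_distrib, mul_sum]
    exact sum_le_sum fun x _ => (mul_add _ _ _).symm.trans_le <|
      prod_pair_mul_add_le c p hc0 hcrefl hp0 hp1 hpV x.1 x.2
  have hpairs := sum_pair_le_two_mul_sum (fun A => apProb p A * TSP c A)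
    fun A => mul_nonneg (apProb_nonneg p hp0 hp1 A) (TSP_nonneg c hc0 A)
  rw [apExpect_eq_sum_apProb]
  linarith

end Expectation

theorem statement9_general {V : Type*} [Fintype V] [DecidableEq V]
    (c : V → V → ℝ) (p : V → ℝ)
    (hc0 : ∀ x y, 0 ≤ c x y)
    (hcrefl : ∀ v, c v v = 0)
    (hp0 : ∀ v, 0 ≤ p v) (hp1 : ∀ v, p v ≤ 1)
    (hpV : (∑ v, p v) ≤ 1 / 2)
    (T : List V) (hT : IsTour Finset.univ T) :
    apExpect p (fun A => cycCost c (shortcut T A)) ≤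
      2 * apExpect p (fun A => TSP c A) :=
  calc apExpect p (fun A => cycCost c (shortcut T A))
      ≤ apExpect p (fun A => ∑ x ∈ A ×ˢ A, c x.1 x.2) :=
        apExpect_mono p hp0 hp1 fun A =>
          cycCost_le_sum_product c hc0 (hT.1.filter _) fun v hv => by
            simpa using (List.mem_filter.1 hv).2
    _ = ∑ x : V × V, (∏ v ∈ {x.1, x.2}, p v) * c x.1 x.2 := apExpect_sum_product_self c p
    _ ≤ 2 * apExpect p (fun A => TSP c A) :=
        sum_prod_pair_mul_le_two_mul_apExpect_TSP c p hc0 hcrefl hp0 hp1 hpV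

/-- if the total activation probability is at most `1/2`, every a priori tour
has expected short-cut cost at most twice the expected cost of an optimal a posteriori tour. -/
theorem statement9 {V : Type*} [Fintype V] [DecidableEq V]
    (c : V → V → ℝ) (p : V → ℝ)
    (hc0 : ∀ x y, 0 ≤ c x y)
    (hcrefl : ∀ v, c v v = 0)
    (htri : ∀ x y z, c x z ≤ c x y + c y z)
    (hp0 : ∀ v, 0 ≤ p v) (hp1 : ∀ v, p v ≤ 1)
    (hpV : (∑ v, p v) ≤ 1 / 2)
    (T : List V) (hT : IsTour Finset.univ T) :
    apExpect p (fun A => cycCost c (shortcut T A)) ≤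
      2 * apExpect p (fun A => TSP c A) :=
  statement9_general c p hc0 hcrefl hp0 hp1 hpV T hT

end
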